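/- arXiv:2205.15424 — 3 statements merged into one kernel-verified Lean document; each statement's English description precedes it below -/
import Mathlib

section
/- Let x_1, …, x_N ∈ ℝ^D be N ≥ 2 points that are pairwise distinct, and let x'_1, …, x'_N ∈ ℝ^D satisfy ‖x_n − x'_n‖ ≤ ε for all n = 1, …, N, where ε ≤ (1/2)·min_{n₁ ≠ n₂} ‖x_{n₁} − x_{n₂}‖ (the perturbation does not exceed half the minimal pairwise distance between the samples). Then for every K ≥ 1 and every choice of indices n_1, …, n_K ∈ {1, …, N} (with the cyclic convention n_{K+1} = n_1), one has ∑_{k=1}^{K} (1/2)‖x_{n_k} − x'_{n_k}‖² ≤ ∑_{k=1}^{K} (1/2)‖x_{n_k} − x'_{n_{k+1}}‖²; that is, the set of pairs (x_1, x'_1), …, (x_N, x'_N) — equivalently, the map x_k ↦ x'_k — is c-cyclically monotone for the quadratic cost c(x, y) = (1/2)‖x − y‖². -/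
/-- Cyclical monotonicity of small perturbations of a dataset: if
`x₁, …, x_N ∈ ℝ^D` are pairwise distinct and `x'ₙ` is an `ε`-perturbation with
`ε ≤ (1/2) · min_{n₁ ≠ n₂} ‖x_{n₁} - x_{n₂}‖`, then the pairs `(xₙ, x'ₙ)` are
`c`-cyclically monotone for the quadratic cost `c(x, y) = (1/2)‖x - y‖²`. -/
theorem stmt_0 {D N : ℕ} (hN : 2 ≤ N)
    (x x' : Fin N → EuclideanSpace ℝ (Fin D)) (ε : ℝ)
    (hdist : Function.Injective x)
    (hε : ∀ n₁ n₂ : Fin N, n₁ ≠ n₂ → ε ≤ (1 / 2) * ‖x n₁ - x n₂‖)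
    (hpert : ∀ n : Fin N, ‖x n - x' n‖ ≤ ε)
    (K : ℕ) (hK : 1 ≤ K) (n : Fin K → Fin N) :
    ∑ k : Fin K, (1 / 2) * ‖x (n k) - x' (n k)‖ ^ 2 ≤
      ∑ k : Fin K, (1 / 2) * ‖x (n k) - x' (n ⟨(k.1 + 1) % K, Nat.mod_lt _ hK⟩)‖ ^ 2 := by
  apply Finset.sum_le_sum
  intro k _
  set b := n ⟨(k.1 + 1) % K, Nat.mod_lt _ hK⟩ with hb
  by_cases h : n k = b
  · rw [h]
  · have h1 : ‖x (n k) - x' (n k)‖ ≤ ε := hpert _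
    have h2 : ‖x b - x' b‖ ≤ ε := hpert _
    have h3 : ε ≤ (1 / 2) * ‖x (n k) - x b‖ := hε _ _ h
    have htri : ‖x (n k) - x b‖ ≤ ‖x (n k) - x' b‖ + ‖x b - x' b‖ := by
      have := norm_sub_le (x (n k) - x' b) (x b - x' b)
      have heq : (x (n k) - x' b) - (x b - x' b) = x (n k) - x b := by abel
      rwa [heq] at this
    have key : ‖x (n k) - x' (n k)‖ ≤ ‖x (n k) - x' b‖ := by linarith
    have hnn : (0:ℝ) ≤ ‖x (n k) - x' (n k)‖ := norm_nonneg _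
    have := pow_le_pow_left₀ hnn key 2
    linarith
end

section
/- Let x_1, …, x_N ∈ ℝ^D be N ≥ 2 pairwise distinct points and let T: ℝ^D → ℝ^D be any map satisfying ‖T(x_n) − x_n‖ ≤ ε for all n = 1, …, N, where ε ≤ (1/2)·min_{n₁ ≠ n₂} ‖x_{n₁} − x_{n₂}‖ (e.g., an adversarial attack with perturbation budget at most half the minimal pairwise distance between the samples). Then the family of pairs (x_1, T(x_1)), …, (x_N, T(x_N)) is c-cyclically monotone for the quadratic cost c(x, y) = (1/2)‖x − y‖²: for every K ≥ 1 and indices n_1, …, n_K ∈ {1, …, N} (with the cyclic convention n_{K+1} = n_1), ∑_{k=1}^{K} (1/2)‖x_{n_k} − T(x_{n_k})‖² ≤ ∑_{k=1}^{K} (1/2)‖x_{n_k} − T(x_{n_{k+1}})‖². -/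
/-- Adversarial attacks are `c`-cyclically monotone: if `x₁, …, x_N ∈ ℝ^D` are pairwise
distinct and `T : ℝ^D → ℝ^D` satisfies `‖T(xₙ) - xₙ‖ ≤ ε` for all `n`, with
`ε ≤ (1/2) · min_{n₁ ≠ n₂} ‖x_{n₁} - x_{n₂}‖`, then the pairs `(xₙ, T(xₙ))` are
`c`-cyclically monotone for the quadratic cost `c(x, y) = (1/2)‖x - y‖²`. -/
theorem stmt_4 {D N : ℕ} (hN : 2 ≤ N)
    (x : Fin N → EuclideanSpace ℝ (Fin D))
    (T : EuclideanSpace ℝ (Fin D) → EuclideanSpace ℝ (Fin D)) (ε : ℝ)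
    (hdist : Function.Injective x)
    (hε : ∀ n₁ n₂ : Fin N, n₁ ≠ n₂ → ε ≤ (1 / 2) * ‖x n₁ - x n₂‖)
    (hpert : ∀ n : Fin N, ‖T (x n) - x n‖ ≤ ε)
    (K : ℕ) (hK : 1 ≤ K) (n : Fin K → Fin N) :
    ∑ k : Fin K, (1 / 2) * ‖x (n k) - T (x (n k))‖ ^ 2 ≤
      ∑ k : Fin K, (1 / 2) * ‖x (n k) - T (x (n ⟨(k.1 + 1) % K, Nat.mod_lt _ hK⟩))‖ ^ 2 := by
  apply Finset.sum_le_sum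
  intro k _
  set a := n k
  set b := n ⟨(k.1 + 1) % K, Nat.mod_lt _ hK⟩ with hb
  by_cases hab : a = b
  · rw [hab]
  · have h1 : ‖x a - T (x a)‖ ≤ ε := by
      rw [norm_sub_rev]; exact hpert a
    have h2 : ‖T (x b) - x b‖ ≤ ε := hpert b
    have h3 : ε ≤ (1 / 2) * ‖x a - x b‖ := hε a b hab
    have h4 : ‖x a - x b‖ ≤ ‖x a - T (x b)‖ + ‖T (x b) - x b‖ :=
      norm_sub_le_norm_sub_add_norm_sub _ _ _
    have h5 : ‖x a - T (x a)‖ ≤ ‖x a - T (x b)‖ := by linarith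
    have := pow_le_pow_left₀ (norm_nonneg _) h5 2
    linarith
end

section
/- Let x_1, …, x_N ∈ ℝ^D be N ≥ 2 pairwise distinct points, let ε ≤ (1/2)·min_{n₁ ≠ n₂} ‖x_{n₁} − x_{n₂}‖, and let x'_1, …, x'_N ∈ ℝ^D satisfy ‖x_n − x'_n‖ ≤ ε for all n. Then the identity pairing is an optimal assignment for the quadratic cost: for every permutation σ of {1, …, N}, ∑_{n=1}^{N} ‖x_n − x'_n‖² ≤ ∑_{n=1}^{N} ‖x_n − x'_{σ(n)}‖². -/
/-- The identity pairing is an optimal assignment for the quadratic cost: if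
`x₁, …, x_N ∈ ℝ^D` are pairwise distinct, `ε ≤ (1/2) · min_{n₁ ≠ n₂} ‖x_{n₁} - x_{n₂}‖`,
and `‖xₙ - x'ₙ‖ ≤ ε` for all `n`, then for every permutation `σ` of `{1, …, N}`,
`∑ₙ ‖xₙ - x'ₙ‖ ^ 2 ≤ ∑ₙ ‖xₙ - x'_{σ(n)}‖ ^ 2`. -/
theorem stmt_5 {D N : ℕ} (hN : 2 ≤ N)
    (x x' : Fin N → EuclideanSpace ℝ (Fin D)) (ε : ℝ)
    (hdist : Function.Injective x)
    (hε : ∀ n₁ n₂ : Fin N, n₁ ≠ n₂ → ε ≤ (1 / 2) * ‖x n₁ - x n₂‖)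
    (hpert : ∀ n : Fin N, ‖x n - x' n‖ ≤ ε)
    (σ : Equiv.Perm (Fin N)) :
    ∑ n : Fin N, ‖x n - x' n‖ ^ 2 ≤ ∑ n : Fin N, ‖x n - x' (σ n)‖ ^ 2 := by
  apply Finset.sum_le_sum
  intro n _
  by_cases h : σ n = n
  · rw [h]
  · have h1 : ‖x n - x' n‖ ≤ ε := hpert n
    have h2 : 2 * ε ≤ ‖x n - x (σ n)‖ := by
      have := hε (σ n) n h
      rw [norm_sub_rev] at this
      linarith
    have h3 : ‖x n - x (σ n)‖ ≤ ‖x n - x' (σ n)‖ + ‖x' (σ n) - x (σ n)‖ := by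
      simpa using norm_sub_le_norm_sub_add_norm_sub (x n) (x' (σ n)) (x (σ n))
    have h4 : ‖x' (σ n) - x (σ n)‖ ≤ ε := by
      rw [norm_sub_rev]; exact hpert (σ n)
    have h5 : ‖x n - x' n‖ ≤ ‖x n - x' (σ n)‖ := by linarith
    exact pow_le_pow_left₀ (norm_nonneg _) h5 2
end
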